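/- Let X be a spectral space. If U is an open subset of X possessing a maximum element u₀ with respect to the specialization order, then U is quasi-compact and U equals the set of generizations of u₀, i.e., U = {x ∈ X : x ≤ u₀}. -/

import Mathlib

open Set TopologicalSpace

/-- A topology `t` on `X` makes `X` a spectral space: quasi-compact, `T0`, sober, with a basis
of quasi-compact open sets closed under finite (binary) intersections. -/
def IsSpectral (X : Type*) (t : TopologicalSpace X) : Prop :=
  @CompactSpace X t ∧ @T0Space X t ∧ @QuasiSober X t ∧
    ∃ B : Set (Set X),
      (∀ s ∈ B, @IsCompact X t s ∧ @IsOpen X t s) ∧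
      (∀ s ∈ B, ∀ u ∈ B, s ∩ u ∈ B) ∧
      @TopologicalSpace.IsTopologicalBasis X t B

/-- The specialization order of a topology: `x ≤ y` iff `y ∈ closure {x}`. -/
def specLE {X : Type*} (t : TopologicalSpace X) (x y : X) : Prop := y ∈ @closure X t {x}

/-- `b` is the supremum of `S` with respect to the specialization order of `t`. -/
def IsSupSpec {X : Type*} (t : TopologicalSpace X) (S : Set X) (b : X) : Prop :=
  (∀ x ∈ S, specLE t x b) ∧ ∀ c, (∀ x ∈ S, specLE t x c) → specLE t b c

/-- `b` is the infimum of `S` with respect to the specialization order of `t`. -/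
def IsInfSpec {X : Type*} (t : TopologicalSpace X) (S : Set X) (b : X) : Prop :=
  (∀ x ∈ S, specLE t b x) ∧ ∀ c, (∀ x ∈ S, specLE t c x) → specLE t c b

/-- The constructible (patch) topology associated to a topology `t`: the coarsest topology in
which all quasi-compact `t`-open sets are clopen. -/
def patchOf {X : Type*} (t : TopologicalSpace X) : TopologicalSpace X :=
  TopologicalSpace.generateFrom
    {s : Set X | (@IsCompact X t s ∧ @IsOpen X t s) ∨ (@IsCompact X t sᶜ ∧ @IsOpen X t sᶜ)}

/-- Closure with respect to the constructible (patch) topology of `t`. -/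
def patchClosure {X : Type*} (t : TopologicalSpace X) (Y : Set X) : Set X :=
  @closure X (patchOf t) Y

theorem specLE_iff_specializes {X : Type*} [t : TopologicalSpace X] {x y : X} :
    specLE t x y ↔ x ⤳ y :=
  specializes_iff_mem_closure.symm

theorem setOf_specLE_eq_nhdsKer {X : Type*} [t : TopologicalSpace X] (u : X) :
    {x | specLE t x u} = nhdsKer {u} := by
  ext x
  rw [mem_ofPred_eq, specLE_iff_specializes, mem_nhdsKer_singleton]

theorem IsOpen.eq_nhdsKer_singleton {X : Type*} [TopologicalSpace X] {U : Set X} {u : X}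
    (hU : IsOpen U) (hu : u ∈ U) (hmax : ∀ x ∈ U, x ⤳ u) : U = nhdsKer {u} :=
  Subset.antisymm (fun x hx => mem_nhdsKer_singleton.2 (hmax x hx))
    (fun _ hx => (mem_nhdsKer_singleton.1 hx).mem_open hU hu)

theorem stmt3_general {X : Type*} [t : TopologicalSpace X]
    (U : Set X) (hU : IsOpen U) (u₀ : X) (hu₀ : u₀ ∈ U)
    (hmax : ∀ x ∈ U, specLE t x u₀) :
    IsCompact U ∧ U = {x | specLE t x u₀} := by
  have hU_eq : U = nhdsKer {u₀} :=
    hU.eq_nhdsKer_singleton hu₀ fun x hx => specLE_iff_specializes.1 (hmax x hx)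
  rw [setOf_specLE_eq_nhdsKer, hU_eq]
  exact ⟨isCompact_singleton.nhdsKer, rfl⟩

theorem stmt3 {X : Type*} [t : TopologicalSpace X] (hX : IsSpectral X t)
    (U : Set X) (hU : IsOpen U) (u₀ : X) (hu₀ : u₀ ∈ U)
    (hmax : ∀ x ∈ U, specLE t x u₀) :
    IsCompact U ∧ U = {x | specLE t x u₀} :=
  stmt3_general (t := t) U hU u₀ hu₀ hmax
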